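/- Let H₁, H₂, H₃ be Hilbert spaces and T : H₁ → H₂, S : H₂ → H₃ closed densely defined operators with S∘T = 0, satisfying the a priori estimate ‖h‖²_{H₂} ≤ c(‖T*h‖²_{H₁} + ‖Sh‖²_{H₃}) for all h ∈ D(T*)∩D(S), where D(T*)∩D(S) is dense in H₂. Then for every g ∈ ker S there exists f ∈ H₁ with Tf = g and ‖f‖_{H₁} ≤ √c·‖g‖_{H₂}. -/

import Mathlib

/-! On `N = ker S`, a closed subspace containing the range of `T`, the a priori estimate reads
`‖h‖ ≤ √c ‖T* h‖`. Since `(range T)ᗮ ⊆ ker T*`, the orthogonal projection onto `N` preserves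
`D(T*)` and `T*`, so `|⟪g, v⟫| ≤ √c ‖g‖ ‖T* v‖` for `g ∈ N` and `v ∈ D(T*)`. Hence `T* v ↦ ⟪g, v⟫`
is a well-defined functional of norm at most `√c ‖g‖`; by Hahn–Banach and Riesz it is `⟪f, ·⟫`
with `‖f‖ ≤ √c ‖g‖`. Finally `⟪f, T* v⟫ = ⟪g, v⟫` for all `v ∈ D(T*)` says `(f, g) ∈ graph T**`,
which is `graph T` because `T` is closed. -/

open scoped InnerProductSpace

theorem exists_inner_eq_of_norm_le_mul_norm {𝕜 E D : Type*} [RCLike 𝕜] [NormedAddCommGroup E]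
    [InnerProductSpace 𝕜 E] [CompleteSpace E] [AddCommGroup D] [Module 𝕜 D] (A : D →ₗ[𝕜] E)
    (ψ : D →ₗ[𝕜] 𝕜) {C : ℝ} (hC : 0 ≤ C) (hψ : ∀ v, ‖ψ v‖ ≤ C * ‖A v‖) :
    ∃ f : E, ‖f‖ ≤ C ∧ ∀ v, ⟪f, A v⟫_𝕜 = ψ v := by
  have hker : LinearMap.ker A ≤ LinearMap.ker ψ := fun v hv => by
    simpa [LinearMap.mem_ker.1 hv] using hψ v
  let ℓ : LinearMap.range A →ₗ[𝕜] 𝕜 :=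
    (LinearMap.ker A).liftQ ψ hker ∘ₗ A.quotKerEquivRange.symm.toLinearMap
  have hℓ : ∀ v, ℓ ⟨A v, LinearMap.mem_range_self A v⟩ = ψ v := fun v => by simp [ℓ]
  have hbound : ∀ x, ‖ℓ x‖ ≤ C * ‖x‖ := by
    rintro ⟨_, v, rfl⟩
    exact (hℓ v).symm ▸ hψ v
  obtain ⟨L, hL, hL_norm⟩ := exists_extension_norm_eq _ (ℓ.mkContinuous C hbound)
  refine ⟨(InnerProductSpace.toDual 𝕜 E).symm L, ?_, fun v => ?_⟩
  · rw [LinearIsometryEquiv.norm_map, hL_norm]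
    exact ℓ.mkContinuous_norm_le hC hbound
  · rw [InnerProductSpace.toDual_symm_apply, hL ⟨A v, LinearMap.mem_range_self A v⟩,
      LinearMap.mkContinuous_apply, hℓ]

namespace LinearPMap

section Ring

variable {R E F : Type*} [Ring R] [AddCommGroup E] [Module R E] [AddCommGroup F] [Module R F]

def ker (f : E →ₗ.[R] F) : Submodule R E := f.graph.comap (LinearMap.inl R E F)

theorem mem_ker {f : E →ₗ.[R] F} {x : E} : x ∈ f.ker ↔ ∃ hx : x ∈ f.domain, f ⟨x, hx⟩ = 0 := by
  simp only [ker, Submodule.mem_comap, LinearMap.inl_apply, mem_graph_iff, Subtype.exists,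
    exists_and_left, exists_eq_left]

end Ring

theorem IsClosed.isClosed_ker {R E F : Type*} [CommRing R] [AddCommGroup E] [Module R E]
    [TopologicalSpace E] [AddCommGroup F] [Module R F] [TopologicalSpace F] {f : E →ₗ.[R] F}
    (hf : f.IsClosed) : _root_.IsClosed (f.ker : Set E) :=
  hf.preimage (continuous_id.prodMk continuous_const)

variable {𝕜 E F : Type*} [RCLike 𝕜] [NormedAddCommGroup E] [InnerProductSpace 𝕜 E]
  [NormedAddCommGroup F] [InnerProductSpace 𝕜 F] [CompleteSpace E] {T : E →ₗ.[𝕜] F}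

theorem exists_adjoint_apply_eq_zero (hT : Dense (T.domain : Set E)) {y : F}
    (hy : ∀ x : T.domain, ⟪y, T x⟫_𝕜 = 0) : ∃ hy' : y ∈ T†.domain, T† ⟨y, hy'⟩ = 0 := by
  have hinner : ∀ x : T.domain, ⟪(0 : E), x⟫_𝕜 = ⟪y, T x⟫_𝕜 := by simp [hy]
  exact ⟨mem_adjoint_domain_of_exists y ⟨0, hinner⟩, adjoint_apply_eq hT ⟨y, _⟩ hinner⟩

theorem exists_adjoint_starProjection_eq (hT : Dense (T.domain : Set E))
    (N : Submodule 𝕜 F) [N.HasOrthogonalProjection] (hTN : ∀ x : T.domain, T x ∈ N)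
    (v : T†.domain) :
    ∃ hv : N.starProjection v ∈ T†.domain, T† ⟨_, hv⟩ = T† v := by
  obtain ⟨hw, hTw⟩ := exists_adjoint_apply_eq_zero hT (y := v - N.starProjection v)
    fun x => (Submodule.mem_orthogonal' _ _).1 (N.sub_starProjection_mem_orthogonal v) _ (hTN x)
  have hmem : N.starProjection v ∈ T†.domain := by simpa using sub_mem v.2 hw
  have hsub : (⟨N.starProjection v, hmem⟩ : T†.domain) = v - ⟨_, hw⟩ := by ext; simp
  exact ⟨hmem, by rw [hsub, map_sub, hTw, sub_zero]⟩

theorem norm_inner_le_of_norm_le_adjoint (hT : Dense (T.domain : Set E))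
    (N : Submodule 𝕜 F) [N.HasOrthogonalProjection] (hTN : ∀ x : T.domain, T x ∈ N) {C : ℝ}
    (hest : ∀ h : T†.domain, (h : F) ∈ N → ‖(h : F)‖ ≤ C * ‖T† h‖) {g : F} (hg : g ∈ N)
    (v : T†.domain) : ‖⟪g, v⟫_𝕜‖ ≤ C * ‖g‖ * ‖T† v‖ := by
  obtain ⟨hv, hTv⟩ := exists_adjoint_starProjection_eq hT N hTN v
  calc ‖⟪g, v⟫_𝕜‖ = ‖⟪g, N.starProjection v⟫_𝕜‖ := by
        rw [← N.inner_starProjection_left_eq_right, N.starProjection_eq_self_iff.2 hg]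
    _ ≤ ‖g‖ * ‖N.starProjection v‖ := norm_inner_le_norm _ _
    _ ≤ ‖g‖ * (C * ‖T† v‖) := by
        gcongr
        exact hTv ▸ hest ⟨_, hv⟩ (N.starProjection_apply_mem v)
    _ = C * ‖g‖ * ‖T† v‖ := by ring

theorem mem_graph_of_forall_inner_adjoint [CompleteSpace F] (hT : Dense (T.domain : Set E))
    (hTc : T.IsClosed) {f : E} {g : F} (h : ∀ v : T†.domain, ⟪f, T† v⟫_𝕜 = ⟪g, (v : F)⟫_𝕜) :
    (f, g) ∈ T.graph := by
  set G := T.graph.comap (WithLp.linearEquiv 2 𝕜 (E × F)).toLinearMap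
  have hGc : _root_.IsClosed (G : Set (WithLp 2 (E × F))) :=
    hTc.preimage (WithLp.prod_continuous_ofLp 2 E F)
  suffices WithLp.toLp 2 (f, g) ∈ Gᗮᗮ by
    rwa [Submodule.orthogonal_orthogonal_eq_closure, hGc.submodule_topologicalClosure_eq] at this
  refine (Submodule.mem_orthogonal' _ _).2 fun u hu => ?_
  have hadj : (u.ofLp.2, -u.ofLp.1) ∈ T†.graph := by
    rw [adjoint_graph_eq_graph_adjoint hT, Submodule.mem_adjoint_iff]
    intro a b hab
    have hab' := (Submodule.mem_orthogonal _ _).1 hu (WithLp.toLp 2 (a, b)) hab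
    rw [WithLp.prod_inner_apply, WithLp.ofLp_toLp] at hab'
    simp only [inner_neg_right, sub_neg_eq_add]
    linear_combination hab'
  obtain ⟨y, hy, hTy⟩ := T†.mem_graph_iff.1 hadj
  simp only at hy hTy
  rw [WithLp.prod_inner_apply, WithLp.ofLp_toLp, ← neg_neg u.ofLp.1, ← hTy, ← hy, inner_neg_right,
    h y, neg_add_cancel]

end LinearPMap

theorem hormander_solvability_general
    {H1 H2 H3 : Type*}
    [NormedAddCommGroup H1] [InnerProductSpace ℂ H1] [CompleteSpace H1]
    [NormedAddCommGroup H2] [InnerProductSpace ℂ H2] [CompleteSpace H2]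
    [NormedAddCommGroup H3] [InnerProductSpace ℂ H3] [CompleteSpace H3]
    (T : H1 →ₗ.[ℂ] H2) (S : H2 →ₗ.[ℂ] H3)
    (hTdense : Dense (T.domain : Set H1))
    (hTclosed : IsClosed (T.graph : Set (H1 × H2)))
    (hSclosed : IsClosed (S.graph : Set (H2 × H3)))
    (hST : ∀ x : T.domain, ∃ hx : (T x : H2) ∈ S.domain, S ⟨T x, hx⟩ = 0)
    (c : ℝ)
    (hest : ∀ (h : H2) (h1 : h ∈ T.adjoint.domain) (h2 : h ∈ S.domain),
      ‖h‖ ^ 2 ≤ c * (‖T.adjoint ⟨h, h1⟩‖ ^ 2 + ‖S ⟨h, h2⟩‖ ^ 2))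
    (g : H2) (hgdom : g ∈ S.domain) (hg : S ⟨g, hgdom⟩ = 0) :
    ∃ (f : H1) (hf : f ∈ T.domain), T ⟨f, hf⟩ = g ∧ ‖f‖ ≤ Real.sqrt c * ‖g‖ := by
  have : CompleteSpace S.ker := (LinearPMap.IsClosed.isClosed_ker hSclosed).completeSpace_coe
  have hTS : ∀ x : T.domain, T x ∈ S.ker := fun x => LinearPMap.mem_ker.2 (hST x)
  have hest_ker (h : T.adjoint.domain) (hh : (h : H2) ∈ S.ker) :
      ‖(h : H2)‖ ≤ √c * ‖T.adjoint h‖ := by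
    obtain ⟨hS, hS0⟩ := LinearPMap.mem_ker.1 hh
    calc ‖(h : H2)‖ ≤ √(c * ‖T.adjoint h‖ ^ 2) :=
          Real.le_sqrt_of_sq_le (by simpa [hS0] using hest h h.2 hS)
      _ = √c * ‖T.adjoint h‖ := by
          rw [Real.sqrt_mul' _ (sq_nonneg _), Real.sqrt_sq (norm_nonneg _)]
  obtain ⟨f, hf_norm, hf⟩ := exists_inner_eq_of_norm_le_mul_norm T.adjoint.toFun
    (innerₛₗ ℂ g ∘ₗ T.adjoint.domain.subtype) (by positivity)
    (LinearPMap.norm_inner_le_of_norm_le_adjoint hTdense S.ker hTS hest_ker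
      (LinearPMap.mem_ker.2 ⟨hgdom, hg⟩))
  obtain ⟨x, rfl, hTx⟩ :=
    T.mem_graph_iff.1 (LinearPMap.mem_graph_of_forall_inner_adjoint hTdense hTclosed hf)
  exact ⟨x, x.2, hTx, hf_norm⟩

/-- Hörmander's abstract solvability lemma: `T : H₁ → H₂`, `S : H₂ → H₃` closed
densely defined operators with `S ∘ T = 0`, satisfying the a priori estimate
`‖h‖² ≤ c(‖T*h‖² + ‖Sh‖²)` on the dense subspace `D(T*) ∩ D(S)` of `H₂`.  Then
for every `g ∈ ker S` there is `f ∈ D(T)` with `Tf = g` and `‖f‖ ≤ √c ‖g‖`. -/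
theorem hormander_solvability
    {H1 H2 H3 : Type*}
    [NormedAddCommGroup H1] [InnerProductSpace ℂ H1] [CompleteSpace H1]
    [NormedAddCommGroup H2] [InnerProductSpace ℂ H2] [CompleteSpace H2]
    [NormedAddCommGroup H3] [InnerProductSpace ℂ H3] [CompleteSpace H3]
    (T : H1 →ₗ.[ℂ] H2) (S : H2 →ₗ.[ℂ] H3)
    (hTdense : Dense (T.domain : Set H1)) (hSdense : Dense (S.domain : Set H2))
    (hTclosed : IsClosed (T.graph : Set (H1 × H2)))
    (hSclosed : IsClosed (S.graph : Set (H2 × H3)))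
    (hST : ∀ x : T.domain, ∃ hx : (T x : H2) ∈ S.domain, S ⟨T x, hx⟩ = 0)
    (hdense : Dense ({h : H2 | h ∈ T.adjoint.domain ∧ h ∈ S.domain} : Set H2))
    (c : ℝ) (hc : 0 < c)
    (hest : ∀ (h : H2) (h1 : h ∈ T.adjoint.domain) (h2 : h ∈ S.domain),
      ‖h‖ ^ 2 ≤ c * (‖T.adjoint ⟨h, h1⟩‖ ^ 2 + ‖S ⟨h, h2⟩‖ ^ 2))
    (g : H2) (hgdom : g ∈ S.domain) (hg : S ⟨g, hgdom⟩ = 0) :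
    ∃ (f : H1) (hf : f ∈ T.domain), T ⟨f, hf⟩ = g ∧ ‖f‖ ≤ Real.sqrt c * ‖g‖ :=
  hormander_solvability_general T S hTdense hTclosed hSclosed hST c hest g hgdom hg
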